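/- Simulation of CBN and CBV in the λ!-calculus: for all terms t, s of the λ-calculus with explicit substitutions, (1) if t →n s then cbn(t) →w cbn(s) in exactly one weak step; (2) if t →v s then cbv(t) →w* cbv(s) in one or more weak steps. -/
import Mathlib


/-! # The Bang Calculus Revisited: common definitions.

Terms are represented with de Bruijn indices, so that all the meta-level
substitutions are capture-avoiding by construction. -/

/-- Terms of the λ!-calculus.  `esub t u` is the explicit substitution
`t[0\u]`: the (anonymous) binder scopes over `t`, not over `u`. -/
inductive Tm : Type
  | var : ℕ → Tm
  | app : Tm → Tm → Tm
  | lam : Tm → Tm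
  | bang : Tm → Tm
  | der : Tm → Tm
  | esub : Tm → Tm → Tm
  deriving DecidableEq

namespace Tm

/-- lifting a renaming under a binder -/
def liftR (f : ℕ → ℕ) : ℕ → ℕ
  | 0 => 0
  | k + 1 => f k + 1

/-- renaming of free variables -/
def rename (f : ℕ → ℕ) : Tm → Tm
  | var k => var (f k)
  | app t u => app (rename f t) (rename f u)
  | lam t => lam (rename (liftR f) t)
  | bang t => bang (rename f t)
  | der t => der (rename f t)
  | esub t u => esub (rename (liftR f) t) (rename f u)

/-- lifting a simultaneous substitution under a binder -/
def liftS (σ : ℕ → Tm) : ℕ → Tm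
  | 0 => var 0
  | k + 1 => rename (· + 1) (σ k)

/-- simultaneous (capture-avoiding) substitution -/
def subst (σ : ℕ → Tm) : Tm → Tm
  | var k => σ k
  | app t u => app (subst σ t) (subst σ u)
  | lam t => lam (subst (liftS σ) t)
  | bang t => bang (subst σ t)
  | der t => der (subst σ t)
  | esub t u => esub (subst (liftS σ) t) (subst σ u)

/-- capture-avoiding substitution of `u` for the variable `0` of `t`,
where the result is placed under `n` extra binders (and `u` already lives
at that depth). -/
def substIn (n : ℕ) (u : Tm) (t : Tm) : Tm :=
  subst (fun k => match k with
    | 0 => u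
    | k + 1 => var (k + n)) t

/-- capture-avoiding meta-level substitution `t{0 := u}` -/
def subst0 (u : Tm) (t : Tm) : Tm := substIn 0 u t

/-- plugging a term into a list context `L ::= ◻ | L[x\t]`; the head of the
list is the argument of the outermost explicit substitution. -/
def plug : List Tm → Tm → Tm
  | [], s => s
  | e :: L, s => esub (plug L s) e

/-- the w-size of a term -/
def wsize : Tm → ℕ
  | var _ => 0
  | app t u => 1 + wsize t + wsize u
  | lam t => 1 + wsize t
  | bang _ => 0
  | der t => 1 + wsize t
  | esub t u => 1 + wsize t + wsize u

end Tm

/-- the names of the three rewriting rules of the λ!-calculus -/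
inductive Rule : Type
  | dB | sb | db
  deriving DecidableEq

open Tm in
/-- the three rewriting rules, applied at the root (at a distance) -/
inductive Root : Rule → Tm → Tm → Prop
  | dB (L : List Tm) (t u : Tm) :
      Root .dB (app (plug L (lam t)) u)
               (plug L (esub t (rename (· + L.length) u)))
  | sb (L : List Tm) (t u : Tm) :
      Root .sb (esub t (plug L (bang u))) (plug L (substIn L.length u t))
  | db (L : List Tm) (t : Tm) :
      Root .db (der (plug L (bang t))) (plug L t)

/-- closure of each rule under weak contexts (no reduction under `bang`) -/
inductive Step : Rule → Tm → Tm → Prop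
  | root {r : Rule} {t t' : Tm} : Root r t t' → Step r t t'
  | appL {r t t'} (u : Tm) : Step r t t' → Step r (Tm.app t u) (Tm.app t' u)
  | appR {r u u'} (t : Tm) : Step r u u' → Step r (Tm.app t u) (Tm.app t u')
  | lam {r t t'} : Step r t t' → Step r (Tm.lam t) (Tm.lam t')
  | der {r t t'} : Step r t t' → Step r (Tm.der t) (Tm.der t')
  | esubL {r t t'} (u : Tm) : Step r t t' → Step r (Tm.esub t u) (Tm.esub t' u)
  | esubR {r u u'} (t : Tm) : Step r u u' → Step r (Tm.esub t u) (Tm.esub t u')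

/-- the weak reduction `→w` of the λ!-calculus -/
def StepW (t t' : Tm) : Prop := ∃ r, Step r t t'

/-- counted weak reduction: `RedCnt t (b, e) u` holds iff `t →w* u` using `b`
dB-steps and `e` steps of kind s!/d!. -/
inductive RedCnt : Tm → ℕ × ℕ → Tm → Prop
  | refl (t : Tm) : RedCnt t (0, 0) t
  | db {t t₁ u : Tm} {b e : ℕ} :
      Step .dB t t₁ → RedCnt t₁ (b, e) u → RedCnt t (b + 1, e) u
  | ex {t t₁ u : Tm} {b e : ℕ} :
      (Step .sb t t₁ ∨ Step .db t t₁) → RedCnt t₁ (b, e) u →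
      RedCnt t (b, e + 1) u

mutual
  /-- neutral w-normal terms -/
  inductive NeW : Tm → Prop
    | var (k : ℕ) : NeW (Tm.var k)
    | app {t u : Tm} : NaW t → NoW u → NeW (Tm.app t u)
    | der {t : Tm} : NbW t → NeW (Tm.der t)
    | esub {t u : Tm} : NeW t → NbW u → NeW (Tm.esub t u)
  /-- neutral-abs w-normal terms -/
  inductive NaW : Tm → Prop
    | bang (t : Tm) : NaW (Tm.bang t)
    | ne {t : Tm} : NeW t → NaW t
    | esub {t u : Tm} : NaW t → NbW u → NaW (Tm.esub t u)
  /-- neutral-bang w-normal terms -/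
  inductive NbW : Tm → Prop
    | ne {t : Tm} : NeW t → NbW t
    | lam {t : Tm} : NoW t → NbW (Tm.lam t)
    | esub {t u : Tm} : NbW t → NbW u → NbW (Tm.esub t u)
  /-- w-normal terms -/
  inductive NoW : Tm → Prop
    | na {t : Tm} : NaW t → NoW t
    | nb {t : Tm} : NbW t → NoW t
end

/-- clashes -/
inductive Clash : Tm → Prop
  | appBang (L : List Tm) (t u : Tm) : Clash (Tm.app (Tm.plug L (Tm.bang t)) u)
  | esubLam (L : List Tm) (t u : Tm) : Clash (Tm.esub t (Tm.plug L (Tm.lam u)))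
  | derLam (L : List Tm) (u : Tm) : Clash (Tm.der (Tm.plug L (Tm.lam u)))
  | appLam (L : List Tm) (t u : Tm) : Clash (Tm.app t (Tm.plug L (Tm.lam u)))

/-- `WSub t s` holds iff `t = W⟨s⟩` for some weak context `W` -/
inductive WSub : Tm → Tm → Prop
  | refl (t : Tm) : WSub t t
  | appL {t s : Tm} (u : Tm) : WSub t s → WSub (Tm.app t u) s
  | appR {u s : Tm} (t : Tm) : WSub u s → WSub (Tm.app t u) s
  | lam {t s : Tm} : WSub t s → WSub (Tm.lam t) s
  | der {t s : Tm} : WSub t s → WSub (Tm.der t) s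
  | esubL {t s : Tm} (u : Tm) : WSub t s → WSub (Tm.esub t u) s
  | esubR {u s : Tm} (t : Tm) : WSub u s → WSub (Tm.esub t u) s

/-- weak clash freeness -/
def Wcf (t : Tm) : Prop := ¬ ∃ s, WSub t s ∧ Clash s

mutual
  /-- neutral weak clash free normal terms -/
  inductive NeCF : Tm → Prop
    | var (k : ℕ) : NeCF (Tm.var k)
    | app {t u : Tm} : NeCF t → NaCF u → NeCF (Tm.app t u)
    | der {t : Tm} : NeCF t → NeCF (Tm.der t)
    | esub {t u : Tm} : NeCF t → NeCF u → NeCF (Tm.esub t u)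
  /-- neutral-abs weak clash free normal terms -/
  inductive NaCF : Tm → Prop
    | bang (t : Tm) : NaCF (Tm.bang t)
    | ne {t : Tm} : NeCF t → NaCF t
    | esub {t u : Tm} : NaCF t → NeCF u → NaCF (Tm.esub t u)
  /-- neutral-bang weak clash free normal terms -/
  inductive NbCF : Tm → Prop
    | ne {t : Tm} : NeCF t → NbCF t
    | lam {t : Tm} : NoCF t → NbCF (Tm.lam t)
    | esub {t u : Tm} : NbCF t → NeCF u → NbCF (Tm.esub t u)
  /-- weak clash free normal terms -/
  inductive NoCF : Tm → Prop
    | na {t : Tm} : NaCF t → NoCF t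
    | nb {t : Tm} : NbCF t → NoCF t
end

/-- Types of system 𝒰: base types, multiset types and arrow types.  A
multiset type is given by a list of types (a representative of the multiset
it determines). -/
inductive Ty : Type
  | base : ℕ → Ty
  | mult : List Ty → Ty
  | arr : List Ty → Ty → Ty

/-- typing contexts: functions from (de Bruijn) variables to multiset types -/
abbrev Ctx := ℕ → Multiset Ty

/-- the context mapping `k` to `M` and anything else to the empty multiset -/
def Ctx.single (k : ℕ) (M : Multiset Ty) : Ctx := fun j => if j = k then M else 0

/-- removing the (type of the) bound variable `0` from a context -/
def Ctx.tail (Γ : Ctx) : Ctx := fun k => Γ (k + 1)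

/-- extending a context with a multiset type for a fresh variable `0` -/
def Ctx.cons (M : Multiset Ty) (Γ : Ctx) : Ctx := fun k =>
  match k with
  | 0 => M
  | k + 1 => Γ k

/-- Sized typing of system 𝒰: `DerU Γ t τ n` means that there is a derivation
of `Γ ⊢ t : τ` whose size (number of rules, not counting `bg`) is `n`. -/
inductive DerU : Ctx → Tm → Ty → ℕ → Prop
  | ax (k : ℕ) (σ : Ty) : DerU (Ctx.single k {σ}) (Tm.var k) σ 1
  | app {Γ Δ : Ctx} {t u : Tm} {M : List Ty} {τ : Ty} {n m : ℕ} :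
      DerU Γ t (Ty.arr M τ) n → DerU Δ u (Ty.mult M) m →
      DerU (Γ + Δ) (Tm.app t u) τ (n + m + 1)
  | abs {Γ : Ctx} {t : Tm} {τ : Ty} {n : ℕ} (M : List Ty) :
      DerU Γ t τ n → Multiset.ofList M = Γ 0 →
      DerU (Ctx.tail Γ) (Tm.lam t) (Ty.arr M τ) (n + 1)
  | es {Γ Δ : Ctx} {t u : Tm} {σ : Ty} {M : List Ty} {n m : ℕ} :
      DerU Γ t σ n → DerU Δ u (Ty.mult M) m → Multiset.ofList M = Γ 0 →
      DerU (Ctx.tail Γ + Δ) (Tm.esub t u) σ (n + m + 1)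
  | bg {t : Tm} (prs : List (Ctx × Ty × ℕ)) :
      (∀ p ∈ prs, DerU p.1 t p.2.1 p.2.2) →
      DerU ((prs.map (·.1)).sum) (Tm.bang t)
           (Ty.mult (prs.map (·.2.1))) ((prs.map (·.2.2)).sum)
  | dr {Γ : Ctx} {t : Tm} {σ : Ty} {n : ℕ} :
      DerU Γ t (Ty.mult [σ]) n → DerU Γ (Tm.der t) σ (n + 1)

/-! ## The source λ-calculus with explicit substitutions (CBN / CBV) -/

/-- terms of the λ-calculus with explicit substitutions (de Bruijn) -/
inductive Lm : Type
  | var : ℕ → Lm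
  | app : Lm → Lm → Lm
  | lam : Lm → Lm
  | esub : Lm → Lm → Lm
  deriving DecidableEq

namespace Lm

def liftR (f : ℕ → ℕ) : ℕ → ℕ
  | 0 => 0
  | k + 1 => f k + 1

def rename (f : ℕ → ℕ) : Lm → Lm
  | var k => var (f k)
  | app t u => app (rename f t) (rename f u)
  | lam t => lam (rename (liftR f) t)
  | esub t u => esub (rename (liftR f) t) (rename f u)

def liftS (σ : ℕ → Lm) : ℕ → Lm
  | 0 => var 0
  | k + 1 => rename (· + 1) (σ k)

def subst (σ : ℕ → Lm) : Lm → Lm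
  | var k => σ k
  | app t u => app (subst σ t) (subst σ u)
  | lam t => lam (subst (liftS σ) t)
  | esub t u => esub (subst (liftS σ) t) (subst σ u)

def substIn (n : ℕ) (u : Lm) (t : Lm) : Lm :=
  subst (fun k => match k with
    | 0 => u
    | k + 1 => var (k + n)) t

/-- capture-avoiding meta-level substitution `t{0 := u}` -/
def subst0 (u : Lm) (t : Lm) : Lm := substIn 0 u t

def plug : List Lm → Lm → Lm
  | [], s => s
  | e :: L, s => esub (plug L s) e

/-- values -/
def IsVal : Lm → Prop
  | var _ => True
  | lam _ => True
  | _ => False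

/-- the n-size of a term -/
def nsize : Lm → ℕ
  | var _ => 0
  | lam t => 1 + nsize t
  | app t _ => 1 + nsize t
  | esub t _ => 1 + nsize t

/-- the v-size of a term -/
def vsize : Lm → ℕ
  | var _ => 0
  | lam _ => 0
  | app t u => 1 + vsize t + vsize u
  | esub t u => 1 + vsize t + vsize u

end Lm

/-- names of the CBN rules -/
inductive NRule : Type
  | dB | s
  deriving DecidableEq

/-- call-by-name reduction (closure of dB and s under CBN contexts) -/
inductive StepN : NRule → Lm → Lm → Prop
  | dB (L : List Lm) (t u : Lm) :
      StepN .dB (Lm.app (Lm.plug L (Lm.lam t)) u)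
                (Lm.plug L (Lm.esub t (Lm.rename (· + L.length) u)))
  | s (t u : Lm) : StepN .s (Lm.esub t u) (Lm.subst0 u t)
  | appL {r t t'} (u : Lm) : StepN r t t' → StepN r (Lm.app t u) (Lm.app t' u)
  | lam {r t t'} : StepN r t t' → StepN r (Lm.lam t) (Lm.lam t')
  | esubL {r t t'} (u : Lm) : StepN r t t' → StepN r (Lm.esub t u) (Lm.esub t' u)

/-- names of the CBV rules -/
inductive VRule : Type
  | dB | sv
  deriving DecidableEq

/-- call-by-value reduction (closure of dB and sv under CBV contexts) -/
inductive StepV : VRule → Lm → Lm → Prop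
  | dB (L : List Lm) (t u : Lm) :
      StepV .dB (Lm.app (Lm.plug L (Lm.lam t)) u)
                (Lm.plug L (Lm.esub t (Lm.rename (· + L.length) u)))
  | sv (L : List Lm) (t v : Lm) (hv : Lm.IsVal v) :
      StepV .sv (Lm.esub t (Lm.plug L v)) (Lm.plug L (Lm.substIn L.length v t))
  | appL {r t t'} (u : Lm) : StepV r t t' → StepV r (Lm.app t u) (Lm.app t' u)
  | appR {r u u'} (t : Lm) : StepV r u u' → StepV r (Lm.app t u) (Lm.app t u')
  | esubL {r t t'} (u : Lm) : StepV r t t' → StepV r (Lm.esub t u) (Lm.esub t' u)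
  | esubR {r u u'} (t : Lm) : StepV r u u' → StepV r (Lm.esub t u) (Lm.esub t u')

mutual
  /-- CBN neutral terms -/
  inductive NeN : Lm → Prop
    | var (k : ℕ) : NeN (Lm.var k)
    | app {t : Lm} (u : Lm) : NeN t → NeN (Lm.app t u)
  /-- CBN normal terms -/
  inductive NoN : Lm → Prop
    | lam {t : Lm} : NoN t → NoN (Lm.lam t)
    | ne {t : Lm} : NeN t → NoN t
end

mutual
  /-- CBV (substituted) variables -/
  inductive VrV : Lm → Prop
    | var (k : ℕ) : VrV (Lm.var k)
    | esub {t u : Lm} : VrV t → NeV u → VrV (Lm.esub t u)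
  /-- CBV neutral terms -/
  inductive NeV : Lm → Prop
    | app₁ {t u : Lm} : VrV t → NoV u → NeV (Lm.app t u)
    | app₂ {t u : Lm} : NeV t → NoV u → NeV (Lm.app t u)
    | esub {t u : Lm} : NeV t → NeV u → NeV (Lm.esub t u)
  /-- CBV normal terms -/
  inductive NoV : Lm → Prop
    | lam (t : Lm) : NoV (Lm.lam t)
    | vr {t : Lm} : VrV t → NoV t
    | ne {t : Lm} : NeV t → NoV t
    | esub {t u : Lm} : NoV t → NeV u → NoV (Lm.esub t u)
end

/-- counted CBN reduction, recording the number of dB- and s-steps -/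
inductive RedCntN : Lm → ℕ × ℕ → Lm → Prop
  | refl (t : Lm) : RedCntN t (0, 0) t
  | db {t t₁ u : Lm} {b e : ℕ} :
      StepN .dB t t₁ → RedCntN t₁ (b, e) u → RedCntN t (b + 1, e) u
  | s {t t₁ u : Lm} {b e : ℕ} :
      StepN .s t t₁ → RedCntN t₁ (b, e) u → RedCntN t (b, e + 1) u

/-- counted CBV reduction, recording the number of dB- and sv-steps -/
inductive RedCntV : Lm → ℕ × ℕ → Lm → Prop
  | refl (t : Lm) : RedCntV t (0, 0) t
  | db {t t₁ u : Lm} {b e : ℕ} :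
      StepV .dB t t₁ → RedCntV t₁ (b, e) u → RedCntV t (b + 1, e) u
  | sv {t t₁ u : Lm} {b e : ℕ} :
      StepV .sv t t₁ → RedCntV t₁ (b, e) u → RedCntV t (b, e + 1) u

/-- the CBN embedding into the λ!-calculus -/
def cbn : Lm → Tm
  | .var k => .var k
  | .lam t => .lam (cbn t)
  | .app t u => .app (cbn t) (.bang (cbn u))
  | .esub t u => .esub (cbn t) (.bang (cbn u))

/-- `deBang t = some s'` iff `t = L⟨!s⟩` and `s' = L⟨s⟩` -/
def deBang : Tm → Option Tm
  | .bang s => some s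
  | .esub t e => (deBang t).map (fun s => Tm.esub s e)
  | _ => none

/-- the CBV embedding into the λ!-calculus -/
def cbv : Lm → Tm
  | .var k => .bang (.var k)
  | .lam t => .bang (.lam (cbv t))
  | .app t u =>
      match deBang (cbv t) with
      | some r => Tm.app r (cbv u)
      | none => Tm.app (.der (cbv t)) (cbv u)
  | .esub t u => .esub (cbv t) (cbv u)

/-- Sized typing of system 𝒩 (call-by-name): `DerN Γ t τ n` means that there
is a derivation of `Γ ⊢ t : τ` of size `n` (counting all rules). -/
inductive DerN : Ctx → Lm → Ty → ℕ → Prop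
  | ax (k : ℕ) (σ : Ty) : DerN (Ctx.single k {σ}) (Lm.var k) σ 1
  | app {Γ : Ctx} {t u : Lm} {τ : Ty} {n : ℕ} (prs : List (Ctx × Ty × ℕ)) :
      DerN Γ t (Ty.arr (prs.map (·.2.1)) τ) n →
      (∀ p ∈ prs, DerN p.1 u p.2.1 p.2.2) →
      DerN (Γ + (prs.map (·.1)).sum) (Lm.app t u) τ
           (n + (prs.map (·.2.2)).sum + 1)
  | abs {Γ : Ctx} {t : Lm} {τ : Ty} {n : ℕ} (M : List Ty) :
      DerN Γ t τ n → Multiset.ofList M = Γ 0 →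
      DerN (Ctx.tail Γ) (Lm.lam t) (Ty.arr M τ) (n + 1)
  | es {Γ : Ctx} {t u : Lm} {τ : Ty} {n : ℕ} (prs : List (Ctx × Ty × ℕ)) :
      DerN Γ t τ n →
      Multiset.ofList (prs.map (·.2.1)) = Γ 0 →
      (∀ p ∈ prs, DerN p.1 u p.2.1 p.2.2) →
      DerN (Ctx.tail Γ + (prs.map (·.1)).sum) (Lm.esub t u) τ
           (n + (prs.map (·.2.2)).sum + 1)

/-- Sized typing of system 𝒱 (call-by-value): `DerV Γ t τ n` means that there
is a derivation of `Γ ⊢ t : τ` of size `n` (each rule counts 1, except that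
`ax` counts the cardinal of its multiset and `abs` contributes the sizes of
its premises plus the number of premises). -/
inductive DerV : Ctx → Lm → Ty → ℕ → Prop
  | ax (k : ℕ) (M : List Ty) :
      DerV (Ctx.single k (Multiset.ofList M)) (Lm.var k) (Ty.mult M) M.length
  | es {Γ Δ : Ctx} {t u : Lm} {σ : Ty} {M : List Ty} {n m : ℕ} :
      DerV Γ t σ n → DerV Δ u (Ty.mult M) m → Multiset.ofList M = Γ 0 →
      DerV (Ctx.tail Γ + Δ) (Lm.esub t u) σ (n + m + 1)
  | abs {t : Lm} (prs : List (Ctx × List Ty × Ty × ℕ)) :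
      (∀ p ∈ prs, DerV p.1 t p.2.2.1 p.2.2.2) →
      (∀ p ∈ prs, Multiset.ofList p.2.1 = p.1 0) →
      DerV ((prs.map (fun p => Ctx.tail p.1)).sum) (Lm.lam t)
           (Ty.mult (prs.map (fun p => Ty.arr p.2.1 p.2.2.1)))
           ((prs.map (·.2.2.2)).sum + prs.length)
  | app {Γ Δ : Ctx} {t u : Lm} {M : List Ty} {τ : Ty} {n m : ℕ} :
      DerV Γ t (Ty.mult [Ty.arr M τ]) n → DerV Δ u (Ty.mult M) m →
      DerV (Γ + Δ) (Lm.app t u) τ (n + m + 1)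


/-! ## Auxiliary lemmas for the simulation -/

section SimulAux

open Tm

/-- mapping a substitution over a list context (with the proper lifts) -/
def substL (σ : ℕ → Tm) : List Tm → List Tm
  | [] => []
  | e :: L => Tm.subst σ e :: substL (Tm.liftS σ) L

theorem substL_length (σ : ℕ → Tm) (L : List Tm) :
    (substL σ L).length = L.length := by
  induction L generalizing σ <;> simp [substL, *]

theorem plug_append (L₁ L₂ : List Tm) (X : Tm) :
    Tm.plug (L₁ ++ L₂) X = Tm.plug L₁ (Tm.plug L₂ X) := by
  induction L₁ <;> simp [Tm.plug, *]

theorem subst_plug (σ : ℕ → Tm) (L : List Tm) (X : Tm) :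
    Tm.subst σ (Tm.plug L X)
      = Tm.plug (substL σ L) (Tm.subst (Tm.liftS^[L.length] σ) X) := by
  induction L generalizing σ with
  | nil => rfl
  | cons e L ih =>
      simp [Tm.plug, Tm.subst, substL, ih, Function.iterate_succ_apply]

theorem deBang_plug_bang (L : List Tm) (s : Tm) :
    deBang (Tm.plug L (Tm.bang s)) = some (Tm.plug L s) := by
  induction L <;> simp [Tm.plug, deBang, *]

theorem deBang_some : ∀ {X Y : Tm}, deBang X = some Y →
    ∃ L s, X = Tm.plug L (Tm.bang s) ∧ Y = Tm.plug L s := by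
  intro X
  induction X with
  | var k => intro Y h; simp [deBang] at h
  | app t u iht ihu => intro Y h; simp [deBang] at h
  | lam t ih => intro Y h; simp [deBang] at h
  | der t ih => intro Y h; simp [deBang] at h
  | bang s => intro Y h
              refine ⟨[], s, rfl, ?_⟩
              simp [deBang] at h
              simp [Tm.plug, h]
  | esub t e iht ihu =>
      intro Y h
      simp [deBang] at h
      obtain ⟨Z, hZ, rfl⟩ := h
      obtain ⟨L, s, rfl, rfl⟩ := iht hZ
      exact ⟨e :: L, s, rfl, rfl⟩

theorem deBang_rename (f : ℕ → ℕ) (X : Tm) :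
    deBang (Tm.rename f X) = (deBang X).map (Tm.rename f) := by
  induction X generalizing f with
  | esub t e iht ihu =>
      simp only [Tm.rename, deBang, iht]
      cases deBang t <;> simp [Tm.rename]
  | _ => simp [Tm.rename, deBang, *]

theorem liftR_eq (f : ℕ → ℕ) : Lm.liftR f = Tm.liftR f := by
  funext k; cases k <;> rfl

theorem cbn_rename (f : ℕ → ℕ) (t : Lm) :
    cbn (Lm.rename f t) = Tm.rename f (cbn t) := by
  induction t generalizing f <;>
    simp [Lm.rename, Tm.rename, cbn, liftR_eq, *]

theorem cbn_liftS (σ : ℕ → Lm) :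
    (fun k => cbn (Lm.liftS σ k)) = Tm.liftS (fun k => cbn (σ k)) := by
  funext k
  cases k with
  | zero => rfl
  | succ k => simp [Lm.liftS, Tm.liftS, cbn_rename]

theorem cbn_subst (σ : ℕ → Lm) (t : Lm) :
    cbn (Lm.subst σ t) = Tm.subst (fun k => cbn (σ k)) (cbn t) := by
  induction t generalizing σ <;>
    simp [Lm.subst, Tm.subst, cbn, cbn_liftS, *]

theorem cbn_subst0 (u t : Lm) :
    cbn (Lm.subst0 u t) = Tm.subst0 (cbn u) (cbn t) := by
  rw [Lm.subst0, Lm.substIn, cbn_subst, Tm.subst0, Tm.substIn]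
  congr 1
  funext k; cases k <;> rfl

theorem cbn_plug (L : List Lm) (s : Lm) :
    cbn (Lm.plug L s) = Tm.plug (L.map (fun e => Tm.bang (cbn e))) (cbn s) := by
  induction L <;> simp [Lm.plug, Tm.plug, cbn, *]

/-- the applicative part of the cbv embedding -/
def appv (X U : Tm) : Tm :=
  match deBang X with
  | some r => Tm.app r U
  | none => Tm.app (Tm.der X) U

theorem appv_some {X Y : Tm} (h : deBang X = some Y) (U : Tm) :
    appv X U = Tm.app Y U := by unfold appv; rw [h]

theorem appv_none {X : Tm} (h : deBang X = none) (U : Tm) :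
    appv X U = Tm.app (Tm.der X) U := by unfold appv; rw [h]

theorem cbv_app (t u : Lm) : cbv (Lm.app t u) = appv (cbv t) (cbv u) := rfl

theorem deBang_subst_cbv (t : Lm) (σ : ℕ → Tm) :
    deBang (Tm.subst σ (cbv t)) = (deBang (cbv t)).map (Tm.subst σ) := by
  induction t generalizing σ with
  | var k => simp [cbv, deBang, Tm.subst]
  | lam t ih => simp [cbv, deBang, Tm.subst]
  | app t u iht ihu =>
      rw [cbv_app]
      cases h : deBang (cbv t) with
      | none => rw [appv_none h]; simp [Tm.subst, deBang]
      | some r => rw [appv_some h]; simp [Tm.subst, deBang]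
  | esub t u iht ihu =>
      simp only [cbv, Tm.subst, deBang, iht]
      cases deBang (cbv t) <;> simp [Tm.subst]

theorem cbv_rename (f : ℕ → ℕ) (t : Lm) :
    cbv (Lm.rename f t) = Tm.rename f (cbv t) := by
  induction t generalizing f with
  | var k => rfl
  | lam t ih => simp [Lm.rename, cbv, Tm.rename, liftR_eq, ih]
  | app t u iht ihu =>
      rw [Lm.rename, cbv_app, cbv_app, iht, ihu]
      cases h : deBang (cbv t) with
      | none =>
          rw [appv_none h]
          have h' : deBang (Tm.rename f (cbv t)) = none := by
            rw [deBang_rename, h]; rfl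
          rw [appv_none h', Tm.rename, Tm.rename]
      | some r =>
          rw [appv_some h]
          have h' : deBang (Tm.rename f (cbv t)) = some (Tm.rename f r) := by
            rw [deBang_rename, h]; rfl
          rw [appv_some h', Tm.rename]
  | esub t u iht ihu => simp [Lm.rename, cbv, Tm.rename, liftR_eq, iht, ihu]

theorem cbv_liftS {σ : ℕ → Lm} {σ' : ℕ → Tm}
    (h : ∀ k, cbv (σ k) = Tm.bang (σ' k)) :
    ∀ k, cbv (Lm.liftS σ k) = Tm.bang (Tm.liftS σ' k)
  | 0 => rfl
  | k + 1 => by simp [Lm.liftS, Tm.liftS, cbv_rename, h k, Tm.rename]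

theorem cbv_subst {σ : ℕ → Lm} {σ' : ℕ → Tm}
    (h : ∀ k, cbv (σ k) = Tm.bang (σ' k)) (t : Lm) :
    cbv (Lm.subst σ t) = Tm.subst σ' (cbv t) := by
  induction t generalizing σ σ' with
  | var k => simp [Lm.subst, cbv, Tm.subst, h k]
  | lam t ih => simp [Lm.subst, cbv, Tm.subst, ih (cbv_liftS h)]
  | app t u iht ihu =>
      rw [Lm.subst, cbv_app, cbv_app, iht h, ihu h]
      cases hd : deBang (cbv t) with
      | none =>
          rw [appv_none hd]
          have h' : deBang (Tm.subst σ' (cbv t)) = none := by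
            rw [deBang_subst_cbv, hd]; rfl
          rw [appv_none h', Tm.subst, Tm.subst]
      | some r =>
          rw [appv_some hd]
          have h' : deBang (Tm.subst σ' (cbv t)) = some (Tm.subst σ' r) := by
            rw [deBang_subst_cbv, hd]; rfl
          rw [appv_some h', Tm.subst]
  | esub t u iht ihu =>
      simp [Lm.subst, cbv, Tm.subst, iht (cbv_liftS h), ihu h]

theorem cbv_substIn (n : ℕ) {v : Lm} {w : Tm} (hw : cbv v = Tm.bang w)
    (t : Lm) : cbv (Lm.substIn n v t) = Tm.substIn n w (cbv t) := by
  rw [Lm.substIn, Tm.substIn]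
  apply cbv_subst
  intro k
  cases k with
  | zero => exact hw
  | succ k => rfl

theorem cbv_plug (L : List Lm) (s : Lm) :
    cbv (Lm.plug L s) = Tm.plug (L.map cbv) (cbv s) := by
  induction L <;> simp [Lm.plug, Tm.plug, cbv, *]

theorem deBang_step {ρ : Rule} {X X' : Tm} (h : Step ρ X X') :
    ∀ {Y : Tm}, deBang X = some Y →
      ∃ Y', deBang X' = some Y' ∧ Step ρ Y Y' := by
  induction h with
  | root hr =>
      intro Y hY
      cases hr with
      | dB L t u => simp [deBang] at hY
      | db L t => simp [deBang] at hY
      | sb L₂ t u =>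
          simp only [deBang] at hY
          rw [Option.map_eq_some_iff] at hY
          obtain ⟨Z, hZ, rfl⟩ := hY
          obtain ⟨L', s, rfl, rfl⟩ := deBang_some hZ
          rw [Tm.substIn, subst_plug]
          simp only [Tm.subst]
          rw [← plug_append, deBang_plug_bang]
          refine ⟨_, rfl, Step.root ?_⟩
          have := Root.sb L₂ (Tm.plug L' s) u
          rw [Tm.substIn, subst_plug, ← plug_append] at this
          exact this
  | appL u _ ih => intro Y hY; simp [deBang] at hY
  | appR t _ ih => intro Y hY; simp [deBang] at hY
  | lam _ ih => intro Y hY; simp [deBang] at hY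
  | der _ ih => intro Y hY; simp [deBang] at hY
  | @esubL t t' u hst ih =>
      intro Y hY
      simp only [deBang, Option.map_eq_some_iff] at hY
      obtain ⟨Z, hZ, rfl⟩ := hY
      obtain ⟨Z', hZ', hs⟩ := ih hZ
      exact ⟨Tm.esub Z' u, by simp [deBang, hZ'], Step.esubL u hs⟩
  | @esubR u u' t hst ih =>
      intro Y hY
      simp only [deBang, Option.map_eq_some_iff] at hY
      obtain ⟨Z, hZ, rfl⟩ := hY
      exact ⟨Tm.esub Z u', by simp [deBang, hZ], Step.esubR Z hst⟩

theorem tg_map {f : Tm → Tm} (hf : ∀ {a b : Tm}, StepW a b → StepW (f a) (f b))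
    {x y : Tm} (h : Relation.TransGen StepW x y) :
    Relation.TransGen StepW (f x) (f y) := by
  induction h with
  | single h => exact .single (hf h)
  | tail _ h ih => exact ih.tail (hf h)

theorem appv_step {X X' : Tm} (U : Tm) (h : StepW X X') :
    Relation.TransGen StepW (appv X U) (appv X' U) := by
  obtain ⟨ρ, h⟩ := h
  cases hX : deBang X with
  | some Y =>
      obtain ⟨Y', hY', hs⟩ := deBang_step h hX
      rw [appv_some hX, appv_some hY']
      exact .single ⟨ρ, Step.appL U hs⟩
  | none =>
      have h1 : Step ρ (Tm.app (Tm.der X) U) (Tm.app (Tm.der X') U) :=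
        Step.appL U (Step.der h)
      rw [appv_none hX]
      cases hX' : deBang X' with
      | none => rw [appv_none hX']; exact .single ⟨ρ, h1⟩
      | some Y' =>
          rw [appv_some hX']
          obtain ⟨L, s, rfl, rfl⟩ := deBang_some hX'
          exact (Relation.TransGen.single ⟨ρ, h1⟩).tail
            ⟨.db, Step.appL U (Step.root (Root.db L s))⟩

theorem appv_red {X X' : Tm} (U : Tm) (h : Relation.TransGen StepW X X') :
    Relation.TransGen StepW (appv X U) (appv X' U) := by
  induction h with
  | single h => exact appv_step U h
  | tail _ h ih => exact ih.trans (appv_step U h)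

end SimulAux

/-- **Simulation of CBN and CBV in the λ!-calculus** (Lemma 13): a CBN step
is simulated by exactly one weak step through `cbn`, and a CBV step is
simulated by one or more weak steps through `cbv`. -/
theorem simulation :
    (∀ (t s : Lm) (r : NRule), StepN r t s → StepW (cbn t) (cbn s)) ∧
    (∀ (t s : Lm) (r : VRule), StepV r t s →
      Relation.TransGen StepW (cbv t) (cbv s)) := by
  constructor
  · -- CBN simulation
    intro t s r h
    induction h with
    | dB L t u =>
        refine ⟨.dB, Step.root ?_⟩
        simp only [cbn, cbn_plug, cbn_rename]
        have := Root.dB (L.map fun e => Tm.bang (cbn e)) (cbn t) (Tm.bang (cbn u))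
        simpa [Tm.rename] using this
    | s t u =>
        refine ⟨.sb, Step.root ?_⟩
        have := Root.sb ([] : List Tm) (cbn t) (cbn u)
        simpa [cbn, Tm.plug, cbn_subst0, Tm.subst0] using this
    | appL u _ ih =>
        obtain ⟨ρ, st⟩ := ih
        exact ⟨ρ, Step.appL _ st⟩
    | lam _ ih =>
        obtain ⟨ρ, st⟩ := ih
        exact ⟨ρ, Step.lam st⟩
    | esubL u _ ih =>
        obtain ⟨ρ, st⟩ := ih
        exact ⟨ρ, Step.esubL _ st⟩
  · -- CBV simulation
    intro t s r h
    induction h with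
    | dB L t u =>
        refine .single ⟨.dB, Step.root ?_⟩
        rw [cbv_app, cbv_plug, cbv_plug]
        simp only [cbv, cbv_rename]
        rw [appv_some (deBang_plug_bang _ _)]
        have := Root.dB (L.map cbv) (cbv t) (cbv u)
        simpa using this
    | sv L t v hv =>
        obtain ⟨w, hw⟩ : ∃ w, cbv v = Tm.bang w := by
          cases v with
          | var k => exact ⟨_, rfl⟩
          | lam t => exact ⟨_, rfl⟩
          | app a b => simp [Lm.IsVal] at hv
          | esub a b => simp [Lm.IsVal] at hv
        refine .single ⟨.sb, Step.root ?_⟩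
        simp only [cbv, cbv_plug, hw, cbv_substIn _ hw]
        have := Root.sb (L.map cbv) (cbv t) w
        simpa using this
    | appL u _ ih =>
        rw [cbv_app, cbv_app]
        exact appv_red _ ih
    | appR t _ ih =>
        rw [cbv_app, cbv_app]
        cases h : deBang (cbv t) with
        | some r =>
            rw [appv_some h, appv_some h]
            exact tg_map (fun h => h.elim fun ρ st => ⟨ρ, Step.appR _ st⟩) ih
        | none =>
            rw [appv_none h, appv_none h]
            exact tg_map (fun h => h.elim fun ρ st => ⟨ρ, Step.appR _ st⟩) ih
    | esubL u _ ih =>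
        simp only [cbv]
        exact tg_map (fun h => h.elim fun ρ st => ⟨ρ, Step.esubL _ st⟩) ih
    | esubR t _ ih =>
        simp only [cbv]
        exact tg_map (fun h => h.elim fun ρ st => ⟨ρ, Step.esubR _ st⟩) ih
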